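/- (Continuous-time G+D interlaced estimator, Proposition 2.) Let q be a positive integer, θ ∈ ℝ^q, φ : [0,∞) → ℝ^q continuous, bounded and interval excited, y(t) = φ(t)ᵀθ, γ > 0 a constant and γ_g : [0,∞) → ℝ continuous, positive and bounded. Let θ̂_g : [0,∞) → ℝ^q, Φ : [0,∞) → ℝ^{q×q}, θ̂ : [0,∞) → ℝ^q be differentiable and satisfy θ̂_g'(t) = γ_g(t)·φ(t)·(y(t) − φ(t)ᵀθ̂_g(t)) with θ̂_g(0) = θ_{g0}; Φ'(t) = −γ_g(t)·φ(t)φ(t)ᵀ·Φ(t) with Φ(0) = I_q; and θ̂'(t) = γ·Δ(t)·(Y(t) − Δ(t)·θ̂(t)) with θ̂(0) = θ₀, where Δ(t) := det(I_q − Φ(t)) and Y(t) := adj(I_q − Φ(t))·(θ̂_g(t) − Φ(t)θ_{g0}). Then θ̂(t) converges to θ exponentially fast, i.e., there exist M ≥ 0 and λ > 0 such that |θ̂(t) − θ| ≤ M·e^{−λt} for all t ≥ 0. -/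

import Mathlib

/-!
Both `θ̂_g - θ` and every trajectory `t ↦ Φ t x` solve the gradient error equation
`v' = -γ_g (φ ⬝ᵥ v) φ`, along which `|v|²` is nonincreasing. By uniqueness
`θ̂_g - θ = Φ (θ_{g0} - θ)`, so `Y = Δ θ` and the error `e = θ̂ - θ` obeys `e' = -γ Δ² e`.

Interval excitation makes `Φ` a uniform contraction from `t_c` on: along `v = Φ x` the
dissipated energy `I = ∫₀^{t_c} γ_g (φ ⬝ᵥ v)²` equals `(|x|² - |v(t_c)|²) / 2`, and since `v`
moves by at most `O(√I)` on `[0, t_c]` (Cauchy–Schwarz), `C_c |x|² ≤ ∫ (φ ⬝ᵥ x)² ≤ K I`.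
Compactness of the set of such contractions bounds `Δ = det (1 - Φ)` below by some `δ > 0`,
and Grönwall gives exponential decay of `e` at rate `γ δ²`.
-/

open Matrix Set Real MeasureTheory intervalIntegral

variable {q : ℕ}

lemma dotProduct_self_nonneg (v : Fin q → ℝ) : 0 ≤ v ⬝ᵥ v :=
  Finset.sum_nonneg fun i _ => mul_self_nonneg (v i)

lemma sq_dotProduct_le (v w : Fin q → ℝ) : (v ⬝ᵥ w) ^ 2 ≤ (v ⬝ᵥ v) * (w ⬝ᵥ w) := by
  simpa [dotProduct, sq] using Finset.sum_mul_sq_le_sq_mul_sq Finset.univ v w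

lemma ContinuousOn.dotProduct {α : Type*} [TopologicalSpace α] {s : Set α}
    {f g : α → Fin q → ℝ} (hf : ContinuousOn f s) (hg : ContinuousOn g s) :
    ContinuousOn (fun x => f x ⬝ᵥ g x) s :=
  (continuous_fst.dotProduct continuous_snd).comp_continuousOn (hf.prodMk hg)

lemma HasDerivAt.dotProduct {f g : ℝ → Fin q → ℝ} {f' g' : Fin q → ℝ} {t : ℝ}
    (hf : HasDerivAt f f' t) (hg : HasDerivAt g g' t) :
    HasDerivAt (fun s => f s ⬝ᵥ g s) (f' ⬝ᵥ g t + f t ⬝ᵥ g') t := by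
  rw [_root_.dotProduct, _root_.dotProduct, ← Finset.sum_add_distrib]
  exact HasDerivAt.fun_sum fun i _ => (hasDerivAt_pi.mp hf i).mul (hasDerivAt_pi.mp hg i)

lemma hasDerivAt_mulVec {Φ : ℝ → Matrix (Fin q) (Fin q) ℝ} {D : Matrix (Fin q) (Fin q) ℝ}
    {t : ℝ} (hΦ : ∀ i j, HasDerivAt (fun s => Φ s i j) (D i j) t) (x : Fin q → ℝ) :
    HasDerivAt (fun s => Φ s *ᵥ x) (D *ᵥ x) t :=
  hasDerivAt_pi.mpr fun i => by
    simpa only [mulVec, dotProduct] using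
      HasDerivAt.fun_sum (u := Finset.univ) fun j _ => (hΦ i j).mul_const (x j)

lemma neg_smul_vecMulVec_mul_mulVec (c : ℝ) (u x : Fin q → ℝ) (A : Matrix (Fin q) (Fin q) ℝ) :
    ((-c • vecMulVec u u) * A) *ᵥ x = -(c * (u ⬝ᵥ A *ᵥ x)) • u := by
  rw [← mulVec_mulVec, smul_mulVec, vecMulVec_mulVec]
  simp [smul_smul]

lemma adjugate_one_sub_mulVec {A : Matrix (Fin q) (Fin q) ℝ} {g θ θ₀ : Fin q → ℝ}
    (h : g - θ = A *ᵥ (θ₀ - θ)) : (1 - A).adjugate *ᵥ (g - A *ᵥ θ₀) = (1 - A).det • θ := by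
  have : g - A *ᵥ θ₀ = (1 - A) *ᵥ θ := by
    rw [sub_eq_iff_eq_add.mp h, mulVec_sub, sub_mulVec, one_mulVec]
    abel
  rw [this, mulVec_mulVec, adjugate_mul, smul_mulVec, one_mulVec]

lemma le_mul_exp_of_hasDerivAt_le {f f' : ℝ → ℝ} {a K : ℝ}
    (hf : ∀ t ≥ a, HasDerivAt f (f' t) t) (hle : ∀ t ≥ a, f' t ≤ K * f t) {b : ℝ}
    (hab : a ≤ b) : f b ≤ f a * exp (K * (b - a)) := by
  have := le_gronwallBound_of_liminf_deriv_right_le (ε := 0)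
    (fun t ht => (hf t ht.1).continuousAt.continuousWithinAt)
    (fun t ht _ hr => (hf t ht.1).hasDerivWithinAt.liminf_right_slope_le hr) le_rfl
    (fun t ht => by simpa using hle t ht.1) b ⟨hab, le_rfl⟩
  rwa [gronwallBound_ε0] at this

lemma intervalIntegrable_of_continuousOn_Ici {f : ℝ → ℝ} (hf : ContinuousOn f (Ici 0)) {a b : ℝ}
    (ha : 0 ≤ a) (hb : 0 ≤ b) : IntervalIntegrable f volume a b :=
  (hf.mono fun _ hx => le_trans (le_min ha hb) hx.1).intervalIntegrable

lemma sq_integral_mul_le {w f g : ℝ → ℝ} {a b : ℝ} (hab : a ≤ b)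
    (hw : ∀ x ∈ Icc a b, 0 ≤ w x) (hff : IntervalIntegrable (fun x => w x * f x ^ 2) volume a b)
    (hfg : IntervalIntegrable (fun x => w x * (f x * g x)) volume a b)
    (hgg : IntervalIntegrable (fun x => w x * g x ^ 2) volume a b) :
    (∫ x in a..b, w x * (f x * g x)) ^ 2 ≤
      (∫ x in a..b, w x * f x ^ 2) * ∫ x in a..b, w x * g x ^ 2 := by
  have hquad : ∀ l : ℝ, 0 ≤ (∫ x in a..b, w x * f x ^ 2) * (l * l) +
      2 * (∫ x in a..b, w x * (f x * g x)) * l + ∫ x in a..b, w x * g x ^ 2 := fun l => by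
    have hexp : ∫ x in a..b, w x * (l * f x + g x) ^ 2 =
        (∫ x in a..b, w x * f x ^ 2) * (l * l) +
          2 * (∫ x in a..b, w x * (f x * g x)) * l + ∫ x in a..b, w x * g x ^ 2 := by
      simp_rw [show ∀ x, w x * (l * f x + g x) ^ 2 =
        (l * l) * (w x * f x ^ 2) + (2 * l) * (w x * (f x * g x)) + w x * g x ^ 2 from
          fun x => by ring]
      rw [integral_add ((hff.const_mul _).add (hfg.const_mul _)) hgg,
        integral_add (hff.const_mul _) (hfg.const_mul _), intervalIntegral.integral_const_mul,
        intervalIntegral.integral_const_mul]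
      ring
    rw [← hexp]
    exact integral_nonneg hab fun x hx => mul_nonneg (hw x hx) (sq_nonneg _)
  have := discrim_le_zero hquad
  rw [discrim] at this
  nlinarith

lemma dotProduct_mulVec_gram (φ : ℝ → Fin q → ℝ) {a b : ℝ} (hφ : ContinuousOn φ (uIcc a b))
    (z : Fin q → ℝ) :
    z ⬝ᵥ (of (fun i j => ∫ s in a..b, φ s i * φ s j) *ᵥ z) = ∫ s in a..b, (φ s ⬝ᵥ z) ^ 2 := by
  have hcont : ∀ i j, ContinuousOn (fun s => z i * (φ s i * φ s j) * z j) (uIcc a b) :=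
    fun i j => (continuousOn_const.mul (((continuous_apply i).comp_continuousOn hφ).mul
      ((continuous_apply j).comp_continuousOn hφ))).mul continuousOn_const
  have hsq : ∀ s, (φ s ⬝ᵥ z) ^ 2 = ∑ i, ∑ j, z i * (φ s i * φ s j) * z j := fun s => by
    simp only [sq, dotProduct, Finset.sum_mul_sum]
    exact Finset.sum_congr rfl fun i _ => Finset.sum_congr rfl fun j _ => by ring
  simp_rw [hsq]
  rw [integral_finsetSum fun i _ =>
    (continuousOn_finsetSum _ fun j _ => hcont i j).intervalIntegrable]
  simp_rw [integral_finsetSum fun j _ => (hcont _ j).intervalIntegrable,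
    intervalIntegral.integral_mul_const, intervalIntegral.integral_const_mul]
  simp only [dotProduct, mulVec, of_apply, Finset.mul_sum, mul_assoc]

lemma Matrix.PosSemidef.mul_dotProduct_self_le_integral {φ : ℝ → Fin q → ℝ} {a b C : ℝ}
    (hφ : ContinuousOn φ (uIcc a b))
    (h : (of (fun i j => ∫ s in a..b, φ s i * φ s j) -
      C • (1 : Matrix (Fin q) (Fin q) ℝ)).PosSemidef)
    (z : Fin q → ℝ) : C * (z ⬝ᵥ z) ≤ ∫ s in a..b, (φ s ⬝ᵥ z) ^ 2 := by
  have := h.dotProduct_mulVec_nonneg z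
  rw [star_trivial, sub_mulVec, smul_mulVec, one_mulVec, dotProduct_sub, dotProduct_smul,
    smul_eq_mul, dotProduct_mulVec_gram φ hφ] at this
  linarith

lemma integral_mul_sq_dotProduct_le {c : ℝ → ℝ} {φ : ℝ → Fin q → ℝ}
    (hc0 : ∀ t ≥ (0 : ℝ), 0 ≤ c t) (hc : ContinuousOn c (Ici 0)) (hφ : ContinuousOn φ (Ici 0))
    {cmax β T s : ℝ} (hcmax : ∀ t ∈ Icc 0 T, c t ≤ cmax) (hβ : ∀ t ∈ Icc 0 T, φ t ⬝ᵥ φ t ≤ β)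
    (hs : s ∈ Icc 0 T) (z : Fin q → ℝ) :
    ∫ t in 0..s, c t * (φ t ⬝ᵥ z) ^ 2 ≤ cmax * β * T * (z ⬝ᵥ z) := by
  have hT : 0 ≤ T := hs.1.trans hs.2
  have hcmax0 : 0 ≤ cmax := (hc0 0 le_rfl).trans (hcmax 0 ⟨le_rfl, hT⟩)
  have hβ0 : 0 ≤ β := (dotProduct_self_nonneg _).trans (hβ 0 ⟨le_rfl, hT⟩)
  have hpointwise : ∀ t ∈ Icc 0 s, c t * (φ t ⬝ᵥ z) ^ 2 ≤ cmax * β * (z ⬝ᵥ z) := fun t ht => by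
    have ht' : t ∈ Icc 0 T := ⟨ht.1, ht.2.trans hs.2⟩
    calc c t * (φ t ⬝ᵥ z) ^ 2 ≤ c t * ((φ t ⬝ᵥ φ t) * (z ⬝ᵥ z)) :=
          mul_le_mul_of_nonneg_left (sq_dotProduct_le _ _) (hc0 t ht.1)
      _ ≤ cmax * (β * (z ⬝ᵥ z)) := mul_le_mul (hcmax t ht')
          (mul_le_mul_of_nonneg_right (hβ t ht') (dotProduct_self_nonneg z))
          (mul_nonneg (dotProduct_self_nonneg _) (dotProduct_self_nonneg z)) hcmax0
      _ = cmax * β * (z ⬝ᵥ z) := by ring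
  refine (integral_mono_on hs.1 (intervalIntegrable_of_continuousOn_Ici
    (hc.mul ((hφ.dotProduct continuousOn_const).pow 2)) le_rfl hs.1)
    intervalIntegrable_const hpointwise).trans ?_
  rw [intervalIntegral.integral_const, smul_eq_mul, sub_zero]
  nlinarith [mul_nonneg (mul_nonneg hcmax0 hβ0) (dotProduct_self_nonneg z), hs.2]

def IsGradientErrorFlow (c : ℝ → ℝ) (φ v : ℝ → Fin q → ℝ) : Prop :=
  ∀ t ≥ (0 : ℝ), HasDerivAt v (-(c t * (φ t ⬝ᵥ v t)) • φ t) t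

lemma isGradientErrorFlow_mulVec {c : ℝ → ℝ} {φ : ℝ → Fin q → ℝ}
    {Φ : ℝ → Matrix (Fin q) (Fin q) ℝ}
    (hΦ : ∀ t ≥ (0 : ℝ), ∀ i j, HasDerivAt (fun s => Φ s i j)
      (((-(c t) • vecMulVec (φ t) (φ t)) * Φ t) i j) t) (x : Fin q → ℝ) :
    IsGradientErrorFlow c φ (fun t => Φ t *ᵥ x) := fun t ht => by
  simpa only [neg_smul_vecMulVec_mul_mulVec] using hasDerivAt_mulVec (hΦ t ht) x

namespace IsGradientErrorFlow

variable {c : ℝ → ℝ} {φ v w : ℝ → Fin q → ℝ}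

lemma sub (hv : IsGradientErrorFlow c φ v) (hw : IsGradientErrorFlow c φ w) :
    IsGradientErrorFlow c φ (v - w) := fun t ht =>
  ((hv t ht).sub (hw t ht)).congr_deriv <| by
    simp only [Pi.sub_apply, dotProduct_sub, ← sub_smul]
    ring_nf

lemma continuousOn (hv : IsGradientErrorFlow c φ v) : ContinuousOn v (Ici 0) :=
  fun t ht => (hv t ht).continuousAt.continuousWithinAt

lemma hasDerivAt_dotProduct_self (hv : IsGradientErrorFlow c φ v) {t : ℝ} (ht : 0 ≤ t) :
    HasDerivAt (fun s => v s ⬝ᵥ v s) (-2 * (c t * (φ t ⬝ᵥ v t) ^ 2)) t := by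
  convert (hv t ht).dotProduct (hv t ht) using 1
  simp only [smul_dotProduct, smul_eq_mul, dotProduct_comm (v t)]
  ring

lemma dotProduct_self_le_of_le (hv : IsGradientErrorFlow c φ v) (hc : ∀ t ≥ (0 : ℝ), 0 ≤ c t)
    {s t : ℝ} (hs : 0 ≤ s) (hst : s ≤ t) : v t ⬝ᵥ v t ≤ v s ⬝ᵥ v s := by
  simpa using le_mul_exp_of_hasDerivAt_le (K := 0)
    (fun u hu => hv.hasDerivAt_dotProduct_self (hs.trans hu))
    (fun u hu => by
      rw [zero_mul]
      exact mul_nonpos_of_nonpos_of_nonneg (by norm_num)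
        (mul_nonneg (hc u (hs.trans hu)) (sq_nonneg _))) hst

lemma eq_zero (hv : IsGradientErrorFlow c φ v) (hc : ∀ t ≥ (0 : ℝ), 0 ≤ c t) (h0 : v 0 = 0)
    {t : ℝ} (ht : 0 ≤ t) : v t = 0 := by
  have := hv.dotProduct_self_le_of_le hc le_rfl ht
  rw [h0, dotProduct_zero] at this
  exact dotProduct_self_eq_zero.mp (this.antisymm (dotProduct_self_nonneg _))

lemma two_mul_integral_eq (hv : IsGradientErrorFlow c φ v) (hc : ContinuousOn c (Ici 0))
    (hφ : ContinuousOn φ (Ici 0)) {T : ℝ} (hT : 0 ≤ T) :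
    2 * ∫ t in 0..T, c t * (φ t ⬝ᵥ v t) ^ 2 = v 0 ⬝ᵥ v 0 - v T ⬝ᵥ v T := by
  have hint : IntervalIntegrable (fun t => c t * (φ t ⬝ᵥ v t) ^ 2) volume 0 T :=
    intervalIntegrable_of_continuousOn_Ici (hc.mul ((hφ.dotProduct hv.continuousOn).pow 2))
      le_rfl hT
  have := integral_eq_sub_of_hasDerivAt (fun t ht => hv.hasDerivAt_dotProduct_self
    (by rw [uIcc_of_le hT] at ht; exact ht.1)) (hint.const_mul (-2))
  rw [intervalIntegral.integral_const_mul] at this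
  linarith

lemma dotProduct_sub_eq_integral (hv : IsGradientErrorFlow c φ v) (hc : ContinuousOn c (Ici 0))
    (hφ : ContinuousOn φ (Ici 0)) {s : ℝ} (hs : 0 ≤ s) (z : Fin q → ℝ) :
    z ⬝ᵥ (v 0 - v s) = ∫ t in 0..s, c t * ((φ t ⬝ᵥ v t) * (φ t ⬝ᵥ z)) := by
  have hint : IntervalIntegrable (fun t => -(c t * ((φ t ⬝ᵥ v t) * (φ t ⬝ᵥ z)))) volume 0 s :=
    intervalIntegrable_of_continuousOn_Ici
      (hc.mul ((hφ.dotProduct hv.continuousOn).mul (hφ.dotProduct continuousOn_const))).neg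
      le_rfl hs
  have hderiv : ∀ t ∈ uIcc 0 s, HasDerivAt (fun u => z ⬝ᵥ v u)
      (-(c t * ((φ t ⬝ᵥ v t) * (φ t ⬝ᵥ z)))) t := fun t ht =>
    ((hasDerivAt_const t z).dotProduct (hv t (by rw [uIcc_of_le hs] at ht; exact ht.1)))
      |>.congr_deriv (by
        rw [zero_dotProduct, zero_add, dotProduct_smul, smul_eq_mul, dotProduct_comm z]
        ring)
  rw [dotProduct_sub, ← neg_sub, ← integral_eq_sub_of_hasDerivAt hderiv hint,
    intervalIntegral.integral_neg, neg_neg]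

lemma dotProduct_sub_self_le (hv : IsGradientErrorFlow c φ v) (hc0 : ∀ t ≥ (0 : ℝ), 0 ≤ c t)
    (hc : ContinuousOn c (Ici 0)) (hφ : ContinuousOn φ (Ici 0)) {cmax β T s : ℝ}
    (hcmax : ∀ t ∈ Icc 0 T, c t ≤ cmax) (hβ : ∀ t ∈ Icc 0 T, φ t ⬝ᵥ φ t ≤ β) (hs : s ∈ Icc 0 T) :
    (v 0 - v s) ⬝ᵥ (v 0 - v s) ≤ cmax * β * T * ∫ t in 0..T, c t * (φ t ⬝ᵥ v t) ^ 2 := by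
  set z := v 0 - v s
  set I := ∫ t in 0..T, c t * (φ t ⬝ᵥ v t) ^ 2
  have hT : 0 ≤ T := hs.1.trans hs.2
  have hp : ContinuousOn (fun t => φ t ⬝ᵥ v t) (Ici 0) := hφ.dotProduct hv.continuousOn
  have hφz : ContinuousOn (fun t => φ t ⬝ᵥ z) (Ici 0) := hφ.dotProduct continuousOn_const
  have hIs : ∫ t in 0..s, c t * (φ t ⬝ᵥ v t) ^ 2 ≤ I :=
    integral_mono_interval le_rfl hs.1 hs.2
      (ae_restrict_of_forall_mem measurableSet_Ioc fun t ht =>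
        mul_nonneg (hc0 t ht.1.le) (sq_nonneg _))
      (intervalIntegrable_of_continuousOn_Ici (hc.mul (hp.pow 2)) le_rfl hT)
  have hI : 0 ≤ I := integral_nonneg hT fun t ht => mul_nonneg (hc0 t ht.1) (sq_nonneg _)
  have hzz : z ⬝ᵥ z = ∫ t in 0..s, c t * ((φ t ⬝ᵥ v t) * (φ t ⬝ᵥ z)) :=
    hv.dotProduct_sub_eq_integral hc hφ hs.1 z
  have hCS := sq_integral_mul_le hs.1 (fun t ht => hc0 t ht.1)
    (intervalIntegrable_of_continuousOn_Ici (hc.mul (hp.pow 2)) le_rfl hs.1)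
    (intervalIntegrable_of_continuousOn_Ici (hc.mul (hp.mul hφz)) le_rfl hs.1)
    (intervalIntegrable_of_continuousOn_Ici (hc.mul (hφz.pow 2)) le_rfl hs.1)
  have hφzs : ∫ t in 0..s, c t * (φ t ⬝ᵥ z) ^ 2 ≤ cmax * β * T * (z ⬝ᵥ z) :=
    integral_mul_sq_dotProduct_le hc0 hc hφ hcmax hβ hs z
  have hcmax0 : 0 ≤ cmax := (hc0 0 le_rfl).trans (hcmax 0 ⟨le_rfl, hT⟩)
  have hβ0 : 0 ≤ β := (dotProduct_self_nonneg _).trans (hβ 0 ⟨le_rfl, hT⟩)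
  have hsq : (z ⬝ᵥ z) * (z ⬝ᵥ z) ≤ (cmax * β * T * I) * (z ⬝ᵥ z) := by
    have hJ : 0 ≤ ∫ t in 0..s, c t * (φ t ⬝ᵥ z) ^ 2 :=
      integral_nonneg hs.1 fun t ht => mul_nonneg (hc0 t ht.1) (sq_nonneg _)
    calc (z ⬝ᵥ z) * (z ⬝ᵥ z) = (∫ t in 0..s, c t * ((φ t ⬝ᵥ v t) * (φ t ⬝ᵥ z))) ^ 2 := by
          rw [← hzz, sq]
      _ ≤ I * (cmax * β * T * (z ⬝ᵥ z)) := hCS.trans (mul_le_mul hIs hφzs hJ hI)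
      _ = (cmax * β * T * I) * (z ⬝ᵥ z) := by ring
  rcases (dotProduct_self_nonneg z).eq_or_lt with hz | hz
  · rw [← hz]; positivity
  · exact le_of_mul_le_mul_right hsq hz

lemma mul_dotProduct_self_le (hv : IsGradientErrorFlow c φ v) (hc0 : ∀ t ≥ (0 : ℝ), 0 ≤ c t)
    (hc : ContinuousOn c (Ici 0)) (hφ : ContinuousOn φ (Ici 0)) {cmin cmax β C T : ℝ}
    (hT : 0 ≤ T) (hcmin : 0 < cmin) (hcmin_le : ∀ t ∈ Icc 0 T, cmin ≤ c t)
    (hcmax : ∀ t ∈ Icc 0 T, c t ≤ cmax) (hβ : ∀ t ∈ Icc 0 T, φ t ⬝ᵥ φ t ≤ β)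
    (hIE : ∀ z, C * (z ⬝ᵥ z) ≤ ∫ t in 0..T, (φ t ⬝ᵥ z) ^ 2) :
    C * (v 0 ⬝ᵥ v 0) ≤
      (2 / cmin + 2 * cmax * β ^ 2 * T ^ 2) * ∫ t in 0..T, c t * (φ t ⬝ᵥ v t) ^ 2 := by
  set I := ∫ t in 0..T, c t * (φ t ⬝ᵥ v t) ^ 2
  have hp : ContinuousOn (fun t => φ t ⬝ᵥ v t) (Ici 0) := hφ.dotProduct hv.continuousOn
  have hβ0 : 0 ≤ β := (dotProduct_self_nonneg _).trans (hβ 0 ⟨le_rfl, hT⟩)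
  have hpointwise : ∀ t ∈ Icc 0 T, (φ t ⬝ᵥ v 0) ^ 2 ≤
      2 / cmin * (c t * (φ t ⬝ᵥ v t) ^ 2) + 2 * cmax * β ^ 2 * T * I := by
    intro t ht
    have hsplit : φ t ⬝ᵥ v 0 = φ t ⬝ᵥ v t + φ t ⬝ᵥ (v 0 - v t) := by
      rw [dotProduct_sub]; ring
    have hfirst : (φ t ⬝ᵥ v t) ^ 2 ≤ c t * (φ t ⬝ᵥ v t) ^ 2 / cmin := by
      rw [le_div_iff₀ hcmin, mul_comm]
      exact mul_le_mul_of_nonneg_right (hcmin_le t ht) (sq_nonneg _)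
    have hsecond : (φ t ⬝ᵥ (v 0 - v t)) ^ 2 ≤ β * (cmax * β * T * I) :=
      (sq_dotProduct_le _ _).trans (mul_le_mul (hβ t ht)
        (hv.dotProduct_sub_self_le hc0 hc hφ hcmax hβ ht) (dotProduct_self_nonneg _) hβ0)
    rw [hsplit]
    calc _ ≤ 2 * (φ t ⬝ᵥ v t) ^ 2 + 2 * (φ t ⬝ᵥ (v 0 - v t)) ^ 2 := by
          nlinarith [sq_nonneg (φ t ⬝ᵥ v t - φ t ⬝ᵥ (v 0 - v t))]
      _ ≤ 2 * (c t * (φ t ⬝ᵥ v t) ^ 2 / cmin) + 2 * (β * (cmax * β * T * I)) := by gcongr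
      _ = _ := by ring
  have hint := integral_mono_on hT
    (intervalIntegrable_of_continuousOn_Ici ((hφ.dotProduct continuousOn_const).pow 2) le_rfl hT)
    (((intervalIntegrable_of_continuousOn_Ici (hc.mul (hp.pow 2)) le_rfl hT).const_mul
      (2 / cmin)).add intervalIntegrable_const) hpointwise
  rw [intervalIntegral.integral_add ((intervalIntegrable_of_continuousOn_Ici (hc.mul (hp.pow 2))
      le_rfl hT).const_mul (2 / cmin)) intervalIntegrable_const,
    intervalIntegral.integral_const_mul, intervalIntegral.integral_const, smul_eq_mul] at hint
  simp only [Pi.mul_apply, Pi.pow_apply] at hint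
  calc C * (v 0 ⬝ᵥ v 0) ≤ _ := (hIE (v 0)).trans hint
    _ = _ := by ring

end IsGradientErrorFlow

lemma exists_contraction_of_excitation {c : ℝ → ℝ} {φ : ℝ → Fin q → ℝ}
    {Φ : ℝ → Matrix (Fin q) (Fin q) ℝ} (hΦ : ∀ x, IsGradientErrorFlow c φ (fun t => Φ t *ᵥ x))
    (hΦ0 : Φ 0 = 1) (hc0 : ∀ t ≥ (0 : ℝ), 0 < c t) (hc : ContinuousOn c (Ici 0))
    (hφ : ContinuousOn φ (Ici 0)) {C T : ℝ} (hC : 0 < C) (hT : 0 ≤ T)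
    (hIE : ∀ z, C * (z ⬝ᵥ z) ≤ ∫ t in 0..T, (φ t ⬝ᵥ z) ^ 2) :
    ∃ ρ, 0 ≤ ρ ∧ ρ < 1 ∧ ∀ t ≥ T, ∀ x, (Φ t *ᵥ x) ⬝ᵥ (Φ t *ᵥ x) ≤ ρ * (x ⬝ᵥ x) := by
  have hne : (Icc 0 T).Nonempty := nonempty_Icc.mpr hT
  obtain ⟨s₁, hs₁, hcmin⟩ := isCompact_Icc.exists_isMinOn hne (hc.mono Icc_subset_Ici_self)
  obtain ⟨s₂, -, hcmax⟩ := isCompact_Icc.exists_isMaxOn hne (hc.mono Icc_subset_Ici_self)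
  obtain ⟨s₃, -, hβ⟩ := isCompact_Icc.exists_isMaxOn hne
    ((hφ.dotProduct hφ).mono Icc_subset_Ici_self)
  have hc0' : ∀ t ≥ (0 : ℝ), 0 ≤ c t := fun t ht => (hc0 t ht).le
  set K := 2 / c s₁ + 2 * c s₂ * (φ s₃ ⬝ᵥ φ s₃) ^ 2 * T ^ 2
  have hK : 0 < K := by
    have hcmin0 := hc0 s₁ hs₁.1
    have hcmax0 := hcmin0.trans_le (hcmax hs₁)
    positivity
  refine ⟨K / (K + 2 * C), by positivity, (div_lt_one (by positivity)).mpr (by linarith),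
    fun t ht x => ?_⟩
  have hexc := (hΦ x).mul_dotProduct_self_le hc0' hc hφ hT (hc0 s₁ hs₁.1)
    (fun t ht => hcmin ht) (fun t ht => hcmax ht) (fun t ht => hβ ht) hIE
  have henergy := (hΦ x).two_mul_integral_eq hc hφ hT
  have hI : 0 ≤ ∫ t in 0..T, c t * (φ t ⬝ᵥ Φ t *ᵥ x) ^ 2 :=
    integral_nonneg hT fun t ht => mul_nonneg (hc0' t ht.1) (sq_nonneg _)
  simp only [hΦ0, one_mulVec] at hexc henergy
  refine ((hΦ x).dotProduct_self_le_of_le hc0' hT ht).trans ?_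
  rw [div_mul_eq_mul_div, le_div_iff₀ (by positivity)]
  nlinarith [dotProduct_self_nonneg x]

lemma det_one_sub_pos {M : Matrix (Fin q) (Fin q) ℝ}
    (hM : ∀ x ≠ 0, (M *ᵥ x) ⬝ᵥ (M *ᵥ x) < x ⬝ᵥ x) : 0 < (1 - M).det := by
  set f : ℝ → ℝ := fun s => (1 - s • M).det
  have hf : Continuous f := (continuous_const.sub (continuous_id.smul continuous_const)).matrix_det
  have hne : ∀ s ∈ Icc (0 : ℝ) 1, f s ≠ 0 := by
    rintro s ⟨hs0, hs1⟩ hs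
    obtain ⟨x, hx, hMx⟩ := exists_mulVec_eq_zero_iff.mpr hs
    rw [sub_mulVec, one_mulVec, smul_mulVec, sub_eq_zero] at hMx
    have hxx : x ⬝ᵥ x = s ^ 2 * ((M *ᵥ x) ⬝ᵥ (M *ᵥ x)) := by
      conv_lhs => rw [hMx]
      rw [smul_dotProduct, dotProduct_smul, smul_eq_mul, smul_eq_mul]; ring
    have := hM x hx
    nlinarith [dotProduct_self_nonneg (M *ᵥ x), mul_le_one₀ hs1 hs0 hs1]
  by_contra! h
  obtain ⟨s, hs, hfs⟩ := intermediate_value_Icc' zero_le_one hf.continuousOn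
    (show (0 : ℝ) ∈ Icc (f 1) (f 0) by simpa [f] using h)
  exact hne s hs hfs

lemma sq_apply_le_of_dotProduct_mulVec_le {M : Matrix (Fin q) (Fin q) ℝ} {ρ : ℝ}
    (hM : ∀ x, (M *ᵥ x) ⬝ᵥ (M *ᵥ x) ≤ ρ * (x ⬝ᵥ x)) (i j : Fin q) : M i j ^ 2 ≤ ρ := by
  have := hM (Pi.single j 1)
  rw [mulVec_single_one, dotProduct_single, Pi.single_eq_same, mul_one, mul_one] at this
  refine le_trans ?_ this
  rw [sq]
  exact Finset.single_le_sum (f := fun k => M k j * M k j) (fun k _ => mul_self_nonneg _)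
    (Finset.mem_univ i)

lemma isCompact_setOf_dotProduct_mulVec_le (ρ : ℝ) :
    IsCompact {M : Matrix (Fin q) (Fin q) ℝ | ∀ x, (M *ᵥ x) ⬝ᵥ (M *ᵥ x) ≤ ρ * (x ⬝ᵥ x)} := by
  have hclosed : IsClosed {M : Matrix (Fin q) (Fin q) ℝ |
      ∀ x, (M *ᵥ x) ⬝ᵥ (M *ᵥ x) ≤ ρ * (x ⬝ᵥ x)} := by
    simp only [ofPred_forall]
    exact isClosed_iInter fun x => isClosed_le
      ((continuous_id.matrix_mulVec continuous_const).dotProduct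
        (continuous_id.matrix_mulVec continuous_const)) continuous_const
  -- `|a| ≤ (1 + a ^ 2) / 2 ≤ 1 + ρ` for every entry `a`
  refine (isCompact_univ_pi fun _ => isCompact_univ_pi fun _ =>
    isCompact_Icc (a := -(1 + ρ)) (b := 1 + ρ)).of_isClosed_subset hclosed fun M hM =>
      mem_univ_pi.mpr fun i => mem_univ_pi.mpr fun j => abs_le.mp ?_
  have : M i j ^ 2 ≤ ρ := sq_apply_le_of_dotProduct_mulVec_le (M := of M) hM i j
  nlinarith [sq_abs (M i j), sq_nonneg (|M i j| - 1)]

lemma exists_pos_le_det_one_sub {ρ : ℝ} (hρ0 : 0 ≤ ρ) (hρ1 : ρ < 1) :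
    ∃ δ > 0, ∀ M : Matrix (Fin q) (Fin q) ℝ,
      (∀ x, (M *ᵥ x) ⬝ᵥ (M *ᵥ x) ≤ ρ * (x ⬝ᵥ x)) → δ ≤ (1 - M).det := by
  have hpos : ∀ M : Matrix (Fin q) (Fin q) ℝ,
      (∀ x, (M *ᵥ x) ⬝ᵥ (M *ᵥ x) ≤ ρ * (x ⬝ᵥ x)) → 0 < (1 - M).det := fun M hM =>
    det_one_sub_pos fun x hx => (hM x).trans_lt <| mul_lt_of_lt_one_left
      ((dotProduct_self_nonneg x).lt_of_ne (Ne.symm (mt dotProduct_self_eq_zero.mp hx))) hρ1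
  obtain ⟨M₀, hM₀, hmin⟩ := (isCompact_setOf_dotProduct_mulVec_le ρ).exists_isMinOn
    ⟨0, fun x => by simpa using mul_nonneg hρ0 (dotProduct_self_nonneg x)⟩
    (continuous_const.sub (continuous_id (X := Matrix (Fin q) (Fin q) ℝ))).matrix_det.continuousOn
  exact ⟨_, hpos M₀ hM₀, fun M hM => hmin hM⟩

lemma sqrt_dotProduct_self_le_exp {e : ℝ → Fin q → ℝ} {k : ℝ → ℝ} {T l : ℝ} (hT : 0 ≤ T)
    (hl : 0 ≤ l) (he : ∀ t ≥ (0 : ℝ), HasDerivAt e (-(k t) • e t) t)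
    (hk : ∀ t ≥ (0 : ℝ), 0 ≤ k t) (hkT : ∀ t ≥ T, l ≤ k t) {t : ℝ} (ht : 0 ≤ t) :
    √(e t ⬝ᵥ e t) ≤ √(e 0 ⬝ᵥ e 0) * exp (l * T) * exp (-l * t) := by
  set r := fun t => e t ⬝ᵥ e t
  have hr : ∀ t ≥ (0 : ℝ), HasDerivAt r (-2 * k t * r t) t := fun t ht =>
    ((he t ht).dotProduct (he t ht)).congr_deriv (by
      simp only [r, smul_dotProduct, dotProduct_smul, smul_eq_mul]; ring)
  have hr0 : ∀ t, 0 ≤ r t := fun t => dotProduct_self_nonneg (e t)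
  have hanti : ∀ s t, 0 ≤ s → s ≤ t → r t ≤ r s := fun s t hs hst => by
    simpa using le_mul_exp_of_hasDerivAt_le (K := 0) (fun u hu => hr u (hs.trans hu))
      (fun u hu => by
        have := hk u (hs.trans hu)
        have := hr0 u
        simp only [zero_mul]
        nlinarith) hst
  have hdecay : r t ≤ r 0 * exp (-2 * l * (t - T)) := by
    rcases le_total t T with htT | hTt
    · exact (hanti 0 t le_rfl ht).trans (le_mul_of_one_le_right (hr0 0)
        (one_le_exp (by nlinarith)))
    · refine (le_mul_exp_of_hasDerivAt_le (fun u hu => hr u (hT.trans hu)) (fun u hu => ?_)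
        hTt).trans (mul_le_mul_of_nonneg_right (hanti 0 T le_rfl hT) (exp_pos _).le)
      have := hkT u hu
      have := hr0 u
      nlinarith
  rw [sqrt_le_left (by positivity), mul_pow, mul_pow, sq_sqrt (hr0 0), ← exp_nat_mul,
    ← exp_nat_mul, mul_assoc, ← exp_add]
  convert hdecay using 3
  push_cast; ring

theorem gd_interlaced_estimator_continuous_general
    (q : ℕ) (θ : Fin q → ℝ) (φ : ℝ → Fin q → ℝ)
    (hφcont : ContinuousOn φ (Set.Ici 0))
    -- interval excitation of φ
    (hIE : ∃ C_c : ℝ, 0 < C_c ∧ ∃ t_c : ℝ, 0 < t_c ∧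
      (Matrix.of (fun i j => ∫ s in (0 : ℝ)..t_c, φ s i * φ s j)
        - C_c • (1 : Matrix (Fin q) (Fin q) ℝ)).PosSemidef)
    (y : ℝ → ℝ) (hy : ∀ t ≥ (0 : ℝ), y t = φ t ⬝ᵥ θ)
    (γ : ℝ) (hγ : 0 < γ)
    (γg : ℝ → ℝ) (hγgcont : ContinuousOn γg (Set.Ici 0))
    (hγgpos : ∀ t ≥ (0 : ℝ), 0 < γg t)
    (θg : ℝ → Fin q → ℝ) (θg0 : Fin q → ℝ) (hθg0 : θg 0 = θg0)
    (hθg : ∀ t ≥ (0 : ℝ), HasDerivAt θg ((γg t * (y t - φ t ⬝ᵥ θg t)) • φ t) t)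
    (Φ : ℝ → Matrix (Fin q) (Fin q) ℝ) (hΦ0 : Φ 0 = 1)
    (hΦ : ∀ t ≥ (0 : ℝ), ∀ i j, HasDerivAt (fun s => Φ s i j)
      (((-(γg t) • Matrix.vecMulVec (φ t) (φ t)) * Φ t) i j) t)
    (Δ : ℝ → ℝ) (hΔ : ∀ t, Δ t = ((1 : Matrix (Fin q) (Fin q) ℝ) - Φ t).det)
    (Y : ℝ → Fin q → ℝ)
    (hY : ∀ t, Y t = ((1 : Matrix (Fin q) (Fin q) ℝ) - Φ t).adjugate.mulVec
      (θg t - (Φ t).mulVec θg0))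
    (θhat : ℝ → Fin q → ℝ)
    (hθhat : ∀ t ≥ (0 : ℝ), HasDerivAt θhat ((γ * Δ t) • (Y t - Δ t • θhat t)) t) :
    ∃ M : ℝ, 0 ≤ M ∧ ∃ lam > (0 : ℝ), ∀ t ≥ (0 : ℝ),
      Real.sqrt ((θhat t - θ) ⬝ᵥ (θhat t - θ)) ≤ M * Real.exp (-lam * t) := by
  obtain ⟨C, hC, T, hT, hPSD⟩ := hIE
  have hΦflow : ∀ x, IsGradientErrorFlow γg φ (fun t => Φ t *ᵥ x) :=
    isGradientErrorFlow_mulVec hΦ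
  have hθgflow : IsGradientErrorFlow γg φ (fun t => θg t - θ) := fun t ht =>
    ((hθg t ht).sub_const θ).congr_deriv (by rw [hy t ht, dotProduct_sub]; congr 1; ring)
  have hθg_sub : ∀ t ≥ (0 : ℝ), θg t - θ = Φ t *ᵥ (θg0 - θ) := fun t ht =>
    sub_eq_zero.mp <| (hθgflow.sub (hΦflow (θg0 - θ))).eq_zero (fun t ht => (hγgpos t ht).le)
      (by simp [hθg0, hΦ0]) ht
  obtain ⟨ρ, hρ0, hρ1, hcontr⟩ := exists_contraction_of_excitation hΦflow hΦ0 hγgpos hγgcont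
    hφcont hC hT.le (hPSD.mul_dotProduct_self_le_integral
      (hφcont.mono (by rw [uIcc_of_le hT.le]; exact Icc_subset_Ici_self)))
  obtain ⟨δ, hδ, hdet⟩ := exists_pos_le_det_one_sub (q := q) hρ0 hρ1
  have herr : ∀ t ≥ (0 : ℝ), HasDerivAt (fun t => θhat t - θ)
      (-(γ * Δ t ^ 2) • (θhat t - θ)) t := fun t ht =>
    ((hθhat t ht).sub_const θ).congr_deriv (by
      rw [hY, adjugate_one_sub_mulVec (hθg_sub t ht), ← hΔ, ← smul_sub, smul_smul, neg_smul,
        ← smul_neg, neg_sub]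
      congr 1
      ring)
  refine ⟨√((θhat 0 - θ) ⬝ᵥ (θhat 0 - θ)) * exp (γ * δ ^ 2 * T), by positivity, γ * δ ^ 2,
    by positivity, fun t ht => ?_⟩
  refine sqrt_dotProduct_self_le_exp hT.le (by positivity) herr
    (fun t _ => by positivity) (fun t ht => ?_) ht
  have := hdet _ (hcontr t ht)
  rw [← hΔ] at this
  gcongr

/-- Proposition 2 (continuous time): the G+D interlaced estimator converges
exponentially under interval excitation. -/
theorem gd_interlaced_estimator_continuous
    (q : ℕ) (hq : 0 < q) (θ : Fin q → ℝ) (φ : ℝ → Fin q → ℝ)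
    (hφcont : ContinuousOn φ (Set.Ici 0))
    (hφbdd : ∃ B : ℝ, ∀ t ≥ (0 : ℝ), Real.sqrt (φ t ⬝ᵥ φ t) ≤ B)
    -- interval excitation of φ
    (hIE : ∃ C_c : ℝ, 0 < C_c ∧ ∃ t_c : ℝ, 0 < t_c ∧
      (Matrix.of (fun i j => ∫ s in (0 : ℝ)..t_c, φ s i * φ s j)
        - C_c • (1 : Matrix (Fin q) (Fin q) ℝ)).PosSemidef)
    (y : ℝ → ℝ) (hy : ∀ t ≥ (0 : ℝ), y t = φ t ⬝ᵥ θ)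
    (γ : ℝ) (hγ : 0 < γ)
    (γg : ℝ → ℝ) (hγgcont : ContinuousOn γg (Set.Ici 0))
    (hγgpos : ∀ t ≥ (0 : ℝ), 0 < γg t) (hγgbdd : ∃ B : ℝ, ∀ t ≥ (0 : ℝ), γg t ≤ B)
    (θg : ℝ → Fin q → ℝ) (θg0 : Fin q → ℝ) (hθg0 : θg 0 = θg0)
    (hθg : ∀ t ≥ (0 : ℝ), HasDerivAt θg ((γg t * (y t - φ t ⬝ᵥ θg t)) • φ t) t)
    (Φ : ℝ → Matrix (Fin q) (Fin q) ℝ) (hΦ0 : Φ 0 = 1)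
    (hΦ : ∀ t ≥ (0 : ℝ), ∀ i j, HasDerivAt (fun s => Φ s i j)
      (((-(γg t) • Matrix.vecMulVec (φ t) (φ t)) * Φ t) i j) t)
    (Δ : ℝ → ℝ) (hΔ : ∀ t, Δ t = ((1 : Matrix (Fin q) (Fin q) ℝ) - Φ t).det)
    (Y : ℝ → Fin q → ℝ)
    (hY : ∀ t, Y t = ((1 : Matrix (Fin q) (Fin q) ℝ) - Φ t).adjugate.mulVec
      (θg t - (Φ t).mulVec θg0))
    (θhat : ℝ → Fin q → ℝ) (θ0 : Fin q → ℝ) (hθhat0 : θhat 0 = θ0)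
    (hθhat : ∀ t ≥ (0 : ℝ), HasDerivAt θhat ((γ * Δ t) • (Y t - Δ t • θhat t)) t) :
    ∃ M : ℝ, 0 ≤ M ∧ ∃ lam > (0 : ℝ), ∀ t ≥ (0 : ℝ),
      Real.sqrt ((θhat t - θ) ⬝ᵥ (θhat t - θ)) ≤ M * Real.exp (-lam * t) :=
  gd_interlaced_estimator_continuous_general q θ φ hφcont hIE y hy γ hγ γg hγgcont hγgpos θg θg0
    hθg0 hθg Φ hΦ0 hΦ Δ hΔ Y hY θhat hθhat
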